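/- Let F : ℝ → ℝ be a distribution function (monotone nondecreasing, right-continuous, tending to 0 at −∞ and to 1 at +∞). For each n ≥ 1 define G_n(x) = max(0, 1 + log(F(x))/n), with the convention G_n(x) = 0 when F(x) = 0. Then each G_n is a distribution function, and for every x ∈ ℝ, exp(−n·(1 − G_n(x))) = max(exp(−n), F(x)); in particular exp(−n·(1 − G_n(x))) converges to F(x) as n → ∞. -/

import Mathlib

/-!
Put `φₙ(t) = 1 + log (max (e⁻ⁿ, t)) / n`. This is a continuous nondecreasing map with
`φₙ(0) = 0` and `φₙ(1) = 1`, so `Gₙ = φₙ ∘ F` is again a distribution function, and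
`exp (-n (1 - φₙ t)) = max (e⁻ⁿ, t)` by construction. Letting `n → ∞` gives `max (0, F x) = F x`.
-/

open Filter Topology Set

/-- A distribution function on `ℝ`: monotone nondecreasing, right-continuous,
tending to `0` at `−∞` and to `1` at `+∞`. -/
def IsDF (H : ℝ → ℝ) : Prop :=
  Monotone H ∧ (∀ x, ContinuousWithinAt H (Ici x) x) ∧
    Tendsto H atBot (𝓝 0) ∧ Tendsto H atTop (𝓝 1)

namespace IsDF

variable {F : ℝ → ℝ}

theorem nonneg (hF : IsDF F) (x : ℝ) : 0 ≤ F x :=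
  le_of_tendsto hF.2.2.1 <| by
    filter_upwards [eventually_le_atBot x] with y hy using hF.1 hy

theorem comp (hF : IsDF F) {φ : ℝ → ℝ} (hφ : Continuous φ) (hφ_mono : Monotone φ)
    (hφ0 : φ 0 = 0) (hφ1 : φ 1 = 1) : IsDF (φ ∘ F) := by
  obtain ⟨hmono, hrc, hbot, htop⟩ := hF
  refine ⟨hφ_mono.comp hmono, fun x => hφ.continuousAt.comp_continuousWithinAt (hrc x), ?_, ?_⟩
  · simpa only [hφ0] using (hφ.tendsto 0).comp hbot
  · simpa only [hφ1] using (hφ.tendsto 1).comp htop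

end IsDF

noncomputable def truncatedLogScale (a t : ℝ) : ℝ :=
  1 + Real.log (max (Real.exp (-a)) t) / a

namespace truncatedLogScale

open Real

variable {a : ℝ}

theorem max_exp_pos (a t : ℝ) : 0 < max (exp (-a)) t :=
  (exp_pos _).trans_le (le_max_left _ _)

theorem continuous (a : ℝ) : Continuous (truncatedLogScale a) :=
  continuous_const.add <|
    ((continuous_const.max continuous_id).log fun t => (max_exp_pos a t).ne').div_const a

theorem monotone (ha : 0 ≤ a) : Monotone (truncatedLogScale a) := fun s t hst => by
  unfold truncatedLogScale
  gcongr

theorem apply_zero (ha : a ≠ 0) : truncatedLogScale a 0 = 0 := by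
  rw [truncatedLogScale, max_eq_left (exp_pos _).le, log_exp, neg_div, div_self ha]
  ring

theorem apply_one (ha : 0 ≤ a) : truncatedLogScale a 1 = 1 := by
  rw [truncatedLogScale, max_eq_right (exp_le_one_iff.2 (neg_nonpos.2 ha)), log_one,
    zero_div, add_zero]

theorem eq_max_zero (ha : 0 < a) {t : ℝ} (ht : 0 < t) :
    truncatedLogScale a t = max 0 (1 + log t / a) := by
  rcases le_total (exp (-a)) t with hle | hlt
  · have : -a ≤ log t := by simpa only [log_exp] using log_le_log (exp_pos _) hle
    have : -1 ≤ log t / a := by rw [le_div_iff₀ ha]; linarith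
    rw [truncatedLogScale, max_eq_right hle, max_eq_right (by linarith)]
  · have : log t ≤ -a := by simpa only [log_exp] using log_le_log ht hlt
    have : log t / a ≤ -1 := by rw [div_le_iff₀ ha]; linarith
    rw [truncatedLogScale, max_eq_left hlt, max_eq_left (by linarith), log_exp, neg_div,
      div_self ha.ne']
    ring

theorem exp_neg_mul_one_sub (ha : a ≠ 0) (t : ℝ) :
    exp (-(a * (1 - truncatedLogScale a t))) = max (exp (-a)) t := by
  have : -(a * (1 - truncatedLogScale a t)) = log (max (exp (-a)) t) := by
    rw [truncatedLogScale]
    field_simp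
    ring
  rw [this, exp_log (max_exp_pos a t)]

end truncatedLogScale

theorem tendsto_max_exp_neg_natCast {c : ℝ} (hc : 0 ≤ c) :
    Tendsto (fun n : ℕ => max (Real.exp (-(n : ℝ))) c) atTop (𝓝 c) := by
  have hexp : Tendsto (fun n : ℕ => Real.exp (-(n : ℝ))) atTop (𝓝 0) :=
    Real.tendsto_exp_atBot.comp (tendsto_neg_atTop_atBot.comp tendsto_natCast_atTop_atTop)
  simpa only [max_eq_right hc] using hexp.max (tendsto_const_nhds (x := c))

/-- One-dimensional Balkema–Resnick representation (sufficiency half of Theorem 1.1):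
for a distribution function `F` and `Gₙ(x) = max(0, 1 + log F(x)/n)` (with `Gₙ(x) = 0`
when `F(x) = 0`), each `Gₙ` is a distribution function,
`exp(−n(1 − Gₙ(x))) = max(exp(−n), F(x))`, and `exp(−n(1 − Gₙ(x))) → F(x)`. -/
theorem every_df_is_max_infinitely_divisible
    (F : ℝ → ℝ) (hF : IsDF F)
    (G : ℕ → ℝ → ℝ)
    (hG : ∀ n x, G n x = if F x = 0 then 0 else max 0 (1 + Real.log (F x) / n)) :
    (∀ n : ℕ, 1 ≤ n → IsDF (G n)) ∧
      (∀ n : ℕ, 1 ≤ n → ∀ x, Real.exp (-((n : ℝ) * (1 - G n x)))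
        = max (Real.exp (-(n : ℝ))) (F x)) ∧
      ∀ x, Tendsto (fun n : ℕ => Real.exp (-((n : ℝ) * (1 - G n x)))) atTop (𝓝 (F x)) := by
  have hG_comp : ∀ n : ℕ, 1 ≤ n → G n = truncatedLogScale n ∘ F := by
    intro n hn
    have hn : (0 : ℝ) < n := by exact_mod_cast hn
    funext x
    rw [hG, Function.comp_apply]
    split_ifs with hx
    · rw [hx, truncatedLogScale.apply_zero hn.ne']
    · exact (truncatedLogScale.eq_max_zero hn ((hF.nonneg x).lt_of_ne' hx)).symm
  have hexp : ∀ n : ℕ, 1 ≤ n → ∀ x, Real.exp (-((n : ℝ) * (1 - G n x)))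
      = max (Real.exp (-(n : ℝ))) (F x) := fun n hn x => by
    rw [hG_comp n hn, Function.comp_apply,
      truncatedLogScale.exp_neg_mul_one_sub (by positivity)]
  refine ⟨fun n hn => ?_, hexp, fun x => ?_⟩
  · rw [hG_comp n hn]
    exact hF.comp (truncatedLogScale.continuous n) (truncatedLogScale.monotone n.cast_nonneg)
      (truncatedLogScale.apply_zero (by positivity)) (truncatedLogScale.apply_one n.cast_nonneg)
  · refine (tendsto_max_exp_neg_natCast (hF.nonneg x)).congr' ?_
    filter_upwards [eventually_ge_atTop 1] with n hn
    exact (hexp n hn x).symm
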